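/- Let Γ be a multitree with chain structure 𝐧, let e be an edge of the tree Γ̄ with endpoints v and v', and let w = (w_Γ, μ) be an admissible multidegree on (Γ, 𝐧). Define the twist of w at (e, v) to be the composite of the twists at all vertices of Γ lying in the same connected component as v in Γ̄∖{e}. Then the twist of w at (e, v) changes w exactly as follows: for each edge ẽ of Γ joining v and v', the value μ(ẽ) is increased by σ(ẽ, v); w_Γ(v) is decreased by the number of edges ẽ of Γ joining v and v' whose old value μ(ẽ) was 0; w_Γ(v') is increased by the number of edges ẽ of Γ joining v and v' whose new value μ(ẽ) is 0; and all other values of w_Γ and μ are unchanged. -/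

import Mathlib

/-!
Twisting at a vertex `x` adds `σ(e, x)` to every `μ(e)` and changes `w_Γ` by a sum, over the
edges `e` at `x`, of terms that depend only on `e` and the current value of `μ(e)`. Along a list of
distinct vertices the contribution of an edge therefore depends only on which of its endpoints
occur in the list: if neither occurs it is zero, if both occur the twist at the second endpoint
undoes the first, and if exactly one occurs it is that of a single twist there. In a multitree the
edge `vv'` of `Γ̄` is a bridge, so the component of `v` in `Γ̄ ∖ {vv'}` contains `v`, misses `v'`,
and contains both or neither endpoint of every edge of `Γ` not joining `v` and `v'`.
-/

open scoped Classical

namespace LLS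

variable {V E : Type*}

/-- `σ(e,v)`: `1` if `v` is the tail of `e`, `-1` if `v` is the head of `e`, `0` otherwise. -/
noncomputable def sigma (tail head : E → V) (e : E) (v : V) : ℤ :=
  if tail e = v then 1 else if head e = v then -1 else 0

/-- The endpoint of `e` other than `v` (for `e` adjacent to `v`). -/
noncomputable def otherEnd (tail head : E → V) (e : E) (v : V) : V :=
  if tail e = v then head e else tail e

/-- The multigraph is loopless. -/
def Loopless (tail head : E → V) : Prop := ∀ e, tail e ≠ head e

/-- The multigraph is connected. -/
def MGConnected (tail head : E → V) : Prop :=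
  ∀ u v : V, Relation.ReflTransGen
    (fun a b => ∃ e, (tail e = a ∧ head e = b) ∨ (tail e = b ∧ head e = a)) u v

/-- An admissible multidegree on `(Γ, 𝐧)`: a function `V(Γ) → ℤ` together with an
element `μ(e) ∈ ℤ/𝐧(e)ℤ` for each edge `e`. -/
structure AdmMD (V E : Type*) (n : E → ℕ) where
  wV : V → ℤ
  mu : ∀ e : E, ZMod (n e)

section FinGraph

variable [Fintype V] [Fintype E] [DecidableEq V] [DecidableEq E]

/-- The twist of an admissible multidegree at a vertex `v`. -/
noncomputable def twist (tail head : E → V) (n : E → ℕ) (w : AdmMD V E n) (v : V) :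
    AdmMD V E n where
  wV u := w.wV u
    - (if u = v then ((Finset.univ.filter fun e : E =>
        sigma tail head e v ≠ 0 ∧ w.mu e = 0).card : ℤ) else 0)
    + ((Finset.univ.filter fun e : E => sigma tail head e v ≠ 0 ∧
        w.mu e + (sigma tail head e v : ZMod (n e)) = 0 ∧
        otherEnd tail head e v = u).card : ℤ)
  mu e := w.mu e + (sigma tail head e v : ZMod (n e))

/-- The negative twist of an admissible multidegree at a vertex `v`
(the inverse of `twist`). -/
noncomputable def negTwist (tail head : E → V) (n : E → ℕ) (w : AdmMD V E n) (v : V) :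
    AdmMD V E n where
  wV u := w.wV u
    + (if u = v then ((Finset.univ.filter fun e : E => sigma tail head e v ≠ 0 ∧
        w.mu e - (sigma tail head e v : ZMod (n e)) = 0).card : ℤ) else 0)
    - ((Finset.univ.filter fun e : E => sigma tail head e v ≠ 0 ∧
        w.mu e = 0 ∧ otherEnd tail head e v = u).card : ℤ)
  mu e := w.mu e - (sigma tail head e v : ZMod (n e))

/-- An admissible multidegree is concentrated at `v` if there is an ordering of all
vertices starting with `v` such that composing the negative twists at all previous
vertices makes the multidegree negative at each subsequent vertex. -/
def Concentrated (tail head : E → V) (n : E → ℕ) (w : AdmMD V E n) (v : V) : Prop :=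
  ∃ l : List V, l.Nodup ∧ (∀ x : V, x ∈ l) ∧ l.head? = some v ∧
    ∀ (i : ℕ) (h : i < l.length), 0 < i →
      (((l.take i).foldl (negTwist tail head n) w).wV (l.get ⟨i, h⟩)) < 0

/-- `w` is obtained from `w₀` by a finite sequence of twists, i.e. `w ∈ V(G(w₀))`. -/
def TwistSeq (tail head : E → V) (n : E → ℕ) (w₀ w : AdmMD V E n) : Prop :=
  ∃ l : List V, l.foldl (twist tail head n) w₀ = w

/-- `l` records the successive twist vertices of a minimal path from `w` to `w'`
in `G(w₀)`. -/
def IsMinPath (tail head : E → V) (n : E → ℕ) (w w' : AdmMD V E n) (l : List V) : Prop :=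
  l.foldl (twist tail head n) w = w' ∧
    ∀ l' : List V, l'.foldl (twist tail head n) w = w' → l.length ≤ l'.length

/-- The membership condition describing the subgraph `Ḡ(w₀)` of `G(w₀)`:
no minimal path from `w` to `w_v` involves twisting at `v`. -/
def InBarG (tail head : E → V) (n : E → ℕ) (w₀ : AdmMD V E n) (wv : V → AdmMD V E n)
    (w : AdmMD V E n) : Prop :=
  TwistSeq tail head n w₀ w ∧
    ∀ (v : V) (l : List V), IsMinPath tail head n w (wv v) l → v ∉ l

/-- Edges joining `v` and `u`. -/
noncomputable def edgesBetween (tail head : E → V) (v u : V) : Finset E :=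
  Finset.univ.filter fun e => (tail e = v ∧ head e = u) ∨ (head e = v ∧ tail e = u)

/-- Edges adjacent to `v`. -/
noncomputable def edgesAdj (tail head : E → V) (v : V) : Finset E :=
  Finset.univ.filter fun e => tail e = v ∨ head e = v

/-- The change of a divisor effected by a single chip-firing move at `v`. -/
noncomputable def fireDelta (tail head : E → V) (v : V) : V → ℤ := fun u =>
  ((edgesBetween tail head v u).card : ℤ)
    - (if u = v then ((edgesAdj tail head v).card : ℤ) else 0)

/-- A chip-firing move (twist) at `v`. -/
noncomputable def chipFire (tail head : E → V) (D : V → ℤ) (v : V) : V → ℤ :=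
  fun u => D u + fireDelta tail head v u

/-- The inverse of a chip-firing move at `v`. -/
noncomputable def negChipFire (tail head : E → V) (D : V → ℤ) (v : V) : V → ℤ :=
  fun u => D u - fireDelta tail head v u

/-- A divisor (multidegree) on a graph is concentrated at `v`. -/
def ConcentratedDiv (tail head : E → V) (D : V → ℤ) (v : V) : Prop :=
  ∃ l : List V, l.Nodup ∧ (∀ x : V, x ∈ l) ∧ l.head? = some v ∧
    ∀ (i : ℕ) (h : i < l.length), 0 < i →
      (((l.take i).foldl (negChipFire tail head) D) (l.get ⟨i, h⟩)) < 0

/-- A divisor on a graph is `v₀`-reduced. -/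
def VReduced (tail head : E → V) (D : V → ℤ) (v₀ : V) : Prop :=
  (∀ u, u ≠ v₀ → 0 ≤ D u) ∧
    ∀ S : Finset V, S.Nonempty → v₀ ∉ S →
      ∃ v ∈ S, D v < ((Finset.univ.filter fun e : E =>
        (tail e = v ∧ head e ∉ S) ∨ (head e = v ∧ tail e ∉ S)).card : ℤ)

/-- The function `D_{w,v}` on edges of `Γ` determined by a path `l` from `w` to `w_v`. -/
noncomputable def DFun (tail head : E → V) (n : E → ℕ) (w : AdmMD V E n) (l : List V)
    (v : V) (et : E) : ℤ :=
  (((Finset.univ : Finset (Fin l.length)).filter fun j =>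
      l.get j = otherEnd tail head et v ∧
        ((l.take (j.val + 1)).foldl (twist tail head n) w).mu et = 0).card : ℤ)
  - (((Finset.univ : Finset (Fin l.length)).filter fun j =>
      l.get j = v ∧ ((l.take j.val).foldl (twist tail head n) w).mu et = 0).card : ℤ)

end FinGraph

/-- The tail map of the subdivided graph `Γ̃`: the edge `e` of `Γ` is subdivided into
`𝐧(e)` edges `(e, j)`, `j = 0, …, 𝐧(e) - 1`, numbered from the tail of `e`; the new
vertices over `e` are `(e, i)`, `i = 0, …, 𝐧(e) - 2`, with `(e, i)` being the
`(i+1)`-st new vertex from the tail of `e`. -/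
def tailT (tail head : E → V) (n : E → ℕ) :
    (Σ e : E, Fin (n e)) → V ⊕ Σ e : E, Fin (n e - 1) := fun p =>
  if h : p.2.val = 0 then Sum.inl (tail p.1)
  else Sum.inr ⟨p.1, ⟨p.2.val - 1, by have := p.2.isLt; omega⟩⟩

/-- The head map of the subdivided graph `Γ̃`. -/
def headT (tail head : E → V) (n : E → ℕ) :
    (Σ e : E, Fin (n e)) → V ⊕ Σ e : E, Fin (n e - 1) := fun p =>
  if h : p.2.val = n p.1 - 1 then Sum.inl (head p.1)
  else Sum.inr ⟨p.1, ⟨p.2.val, by have := p.2.isLt; omega⟩⟩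

/-- The multidegree on the subdivided graph `Γ̃` induced by an admissible multidegree:
it agrees with `w` on old vertices, is `1` on the `μ(e)`-th new vertex over `e`
when `μ(e) ≠ 0`, and is `0` on all other new vertices. -/
noncomputable def inducedMD (n : E → ℕ) (w : AdmMD V E n) :
    (V ⊕ Σ e : E, Fin (n e - 1)) → ℤ
  | Sum.inl v => w.wV v
  | Sum.inr ⟨e, i⟩ => if (w.mu e).val = i.val + 1 then 1 else 0

/-- The simple graph `Γ̄` associated to the multigraph `Γ`: same vertices, one edge
between each pair of adjacent vertices. -/
def barGraph (tail head : E → V) : SimpleGraph V where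
  Adj u v := u ≠ v ∧ ∃ e, (tail e = u ∧ head e = v) ∨ (tail e = v ∧ head e = u)
  symm := by
    refine ⟨?_⟩
    intro u v h
    exact ⟨h.1.symm, h.2.imp fun e he => he.symm⟩
  loopless := ⟨fun u h => h.1 rfl⟩

theorem _root_.SimpleGraph.IsAcyclic.not_reflTransGen_of_adj {V : Type*} {G : SimpleGraph V}
    (hG : G.IsAcyclic) {v v' : V} (hadj : G.Adj v v') :
    ¬Relation.ReflTransGen (fun a b => G.Adj a b ∧ ¬((a = v ∧ b = v') ∨ (a = v' ∧ b = v)))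
      v v' := by
  intro h
  refine (SimpleGraph.isBridge_iff.mp (SimpleGraph.isAcyclic_iff_forall_adj_isBridge.mp hG hadj))
    ((SimpleGraph.reachable_iff_reflTransGen _ _).mpr
      (Relation.ReflTransGen.mono (fun a b hab => ?_) _ _ h))
  simpa [SimpleGraph.sdiff_adj, Sym2.eq_iff] using hab

section Twist

variable {tail head : E → V}

lemma sigma_ne_zero_iff {e : E} {a : V} :
    sigma tail head e a ≠ 0 ↔ tail e = a ∨ head e = a := by
  unfold sigma; split_ifs <;> simp_all

lemma sigma_eq_zero {e : E} {x : V} (ht : tail e ≠ x) (hh : head e ≠ x) :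
    sigma tail head e x = 0 := by
  simp [sigma, ht, hh]

lemma otherEnd_ne (hloop : Loopless tail head) (e : E) (a : V) :
    otherEnd tail head e a ≠ a := by
  have := hloop e; unfold otherEnd; split_ifs <;> grind

lemma otherEnd_otherEnd (hloop : Loopless tail head) {e : E} {a : V}
    (ha : tail e = a ∨ head e = a) : otherEnd tail head e (otherEnd tail head e a) = a := by
  have := hloop e; unfold otherEnd; split_ifs <;> grind

lemma sigma_otherEnd (hloop : Loopless tail head) {e : E} {a : V}
    (ha : tail e = a ∨ head e = a) :
    sigma tail head e (otherEnd tail head e a) = -sigma tail head e a := by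
  have := hloop e; unfold otherEnd sigma; split_ifs <;> grind

lemma endpoint_otherEnd (e : E) (a : V) :
    tail e = otherEnd tail head e a ∨ head e = otherEnd tail head e a := by
  unfold otherEnd; split_ifs <;> grind

lemma endpoint_eq_or_eq_otherEnd {e : E} {a x : V} (ha : tail e = a ∨ head e = a)
    (hx : tail e = x ∨ head e = x) : x = a ∨ x = otherEnd tail head e a := by
  unfold otherEnd; split_ifs <;> grind

variable (tail head) in
abbrev Joins (v v' : V) (e : E) : Prop :=
  (tail e = v ∧ head e = v') ∨ (tail e = v' ∧ head e = v)

lemma Joins.endpoint {v v' : V} {e : E} (h : Joins tail head v v' e) :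
    tail e = v ∨ head e = v := by
  tauto

lemma Joins.otherEnd_eq (hloop : Loopless tail head) {v v' : V} {e : E}
    (h : Joins tail head v v' e) : otherEnd tail head e v = v' := by
  have := hloop e; unfold otherEnd; grind

variable [DecidableEq V] (tail head) (n : E → ℕ)

/-- The change of `w_Γ(u)` due to the edge `e` when twisting at `x` while `μ(e) = m`. -/
noncomputable def edgeTwistDelta (e : E) (x u : V) (m : ZMod (n e)) : ℤ :=
  (if sigma tail head e x ≠ 0 ∧ m + sigma tail head e x = 0 ∧ otherEnd tail head e x = u
    then 1 else 0)
  - (if u = x ∧ sigma tail head e x ≠ 0 ∧ m = 0 then 1 else 0)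

noncomputable def edgeFoldDelta (e : E) (u : V) : ZMod (n e) → List V → ℤ
  | _, [] => 0
  | m, x :: l => edgeTwistDelta tail head n e x u m
      + edgeFoldDelta e u (m + sigma tail head e x) l

variable {tail head n}

lemma edgeTwistDelta_of_sigma_eq_zero {e : E} {x : V} (h : sigma tail head e x = 0) (u : V)
    (m : ZMod (n e)) : edgeTwistDelta tail head n e x u m = 0 := by
  simp [edgeTwistDelta, h]

lemma edgeTwistDelta_add_edgeTwistDelta_otherEnd (hloop : Loopless tail head) {e : E} {a : V}
    (ha : tail e = a ∨ head e = a) (u : V) (m : ZMod (n e)) :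
    edgeTwistDelta tail head n e a u m
      + edgeTwistDelta tail head n e (otherEnd tail head e a) u (m + sigma tail head e a) = 0 := by
  simp only [edgeTwistDelta, sigma_otherEnd hloop ha, otherEnd_otherEnd hloop ha, neg_ne_zero,
    Int.cast_neg, add_neg_cancel_right]
  split_ifs <;> grind

lemma edgeFoldDelta_cons_of_sigma_eq_zero {e : E} {x : V} (h : sigma tail head e x = 0) (u : V)
    (m : ZMod (n e)) (l : List V) :
    edgeFoldDelta tail head n e u m (x :: l) = edgeFoldDelta tail head n e u m l := by
  simp [edgeFoldDelta, edgeTwistDelta_of_sigma_eq_zero h, h]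

lemma edgeFoldDelta_eq_zero {e : E} {l : List V} (ht : tail e ∉ l) (hh : head e ∉ l) (u : V)
    (m : ZMod (n e)) : edgeFoldDelta tail head n e u m l = 0 := by
  induction l with
  | nil => rfl
  | cons x l ih =>
    simp only [List.mem_cons, not_or] at ht hh
    rw [edgeFoldDelta_cons_of_sigma_eq_zero (sigma_eq_zero ht.1 hh.1), ih ht.2 hh.2]

lemma edgeFoldDelta_of_mem_of_not_mem {e : E} {a : V} (ha : tail e = a ∨ head e = a)
    {l : List V} (hnd : l.Nodup) (hal : a ∈ l) (hbl : otherEnd tail head e a ∉ l) (u : V)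
    (m : ZMod (n e)) : edgeFoldDelta tail head n e u m l = edgeTwistDelta tail head n e a u m := by
  induction l generalizing m with
  | nil => simp at hal
  | cons x l ih =>
    obtain ⟨hxl, hnd⟩ := List.nodup_cons.mp hnd
    simp only [List.mem_cons, not_or] at hal hbl
    rcases hal with rfl | hal
    · have hend : ∀ y ∈ l, ¬(tail e = y ∨ head e = y) := fun y hy hy' => by
        rcases endpoint_eq_or_eq_otherEnd ha hy' with rfl | rfl
        exacts [hxl hy, hbl.2 hy]
      rw [edgeFoldDelta, edgeFoldDelta_eq_zero (fun h => hend _ h (.inl rfl))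
        (fun h => hend _ h (.inr rfl)), add_zero]
    · have hx : sigma tail head e x = 0 := by
        by_contra hx
        rcases endpoint_eq_or_eq_otherEnd ha (sigma_ne_zero_iff.mp hx) with rfl | rfl
        exacts [hxl hal, hbl.1 rfl]
      rw [edgeFoldDelta_cons_of_sigma_eq_zero hx, ih hnd hal hbl.2]

lemma edgeFoldDelta_of_mem_of_mem (hloop : Loopless tail head) {e : E} {l : List V}
    (hnd : l.Nodup) (ht : tail e ∈ l) (hh : head e ∈ l) (u : V) (m : ZMod (n e)) :
    edgeFoldDelta tail head n e u m l = 0 := by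
  induction l generalizing m with
  | nil => simp at ht
  | cons x l ih =>
    obtain ⟨hxl, hnd⟩ := List.nodup_cons.mp hnd
    by_cases hx : tail e = x ∨ head e = x
    · have hbl : otherEnd tail head e x ∈ l := by
        have hb : otherEnd tail head e x ∈ x :: l := by
          rcases endpoint_otherEnd (tail := tail) (head := head) e x with h | h <;> rwa [← h]
        exact (List.mem_cons.mp hb).resolve_left (otherEnd_ne hloop e x)
      rw [edgeFoldDelta, edgeFoldDelta_of_mem_of_not_mem (endpoint_otherEnd e x) hnd hbl
        (by rwa [otherEnd_otherEnd hloop hx]), edgeTwistDelta_add_edgeTwistDelta_otherEnd hloop hx]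
    · simp only [not_or] at hx
      rw [edgeFoldDelta_cons_of_sigma_eq_zero (sigma_eq_zero hx.1 hx.2),
        ih hnd ((List.mem_cons.mp ht).resolve_left hx.1) ((List.mem_cons.mp hh).resolve_left hx.2)]

lemma edgeTwistDelta_self (hloop : Loopless tail head) {e : E} {a : V}
    (ha : tail e = a ∨ head e = a) (m : ZMod (n e)) :
    edgeTwistDelta tail head n e a a m = -(if m = 0 then 1 else 0) := by
  simp [edgeTwistDelta, otherEnd_ne hloop, sigma_ne_zero_iff.mpr ha]

lemma edgeTwistDelta_otherEnd (hloop : Loopless tail head) {e : E} {a : V}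
    (ha : tail e = a ∨ head e = a) (m : ZMod (n e)) :
    edgeTwistDelta tail head n e a (otherEnd tail head e a) m
      = if m + sigma tail head e a = 0 then 1 else 0 := by
  simp [edgeTwistDelta, otherEnd_ne hloop e a, sigma_ne_zero_iff.mpr ha]

lemma edgeTwistDelta_of_ne {e : E} {a u : V} (hua : u ≠ a) (hub : u ≠ otherEnd tail head e a)
    (m : ZMod (n e)) : edgeTwistDelta tail head n e a u m = 0 := by
  simp [edgeTwistDelta, hua, Ne.symm hub]

lemma sum_map_sigma (hloop : Loopless tail head) (e : E) {l : List V} (hnd : l.Nodup) :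
    (l.map (sigma tail head e)).sum
      = (if tail e ∈ l then 1 else 0) - (if head e ∈ l then 1 else 0) := by
  induction l with
  | nil => simp
  | cons x l ih =>
    obtain ⟨hxl, hnd⟩ := List.nodup_cons.mp hnd
    have := hloop e
    rw [List.map_cons, List.sum_cons, ih hnd, sigma]
    simp only [List.mem_cons]
    split_ifs <;> grind

variable (tail head) in
structure IsCutSide (v v' : V) (l : List V) : Prop where
  nodup : l.Nodup
  mem_left : v ∈ l
  not_mem_right : v' ∉ l
  mem_iff_mem : ∀ e, ¬Joins tail head v v' e → (tail e ∈ l ↔ head e ∈ l)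

namespace IsCutSide

variable {v v' : V} {l : List V}

lemma edgeFoldDelta_eq (hloop : Loopless tail head) (hl : IsCutSide tail head v v' l) (e : E)
    (u : V) (m : ZMod (n e)) : edgeFoldDelta tail head n e u m l
      = if Joins tail head v v' e then edgeTwistDelta tail head n e v u m else 0 := by
  split_ifs with he
  · exact edgeFoldDelta_of_mem_of_not_mem he.endpoint hl.nodup hl.mem_left
      (he.otherEnd_eq hloop ▸ hl.not_mem_right) u m
  · by_cases ht : tail e ∈ l
    · exact edgeFoldDelta_of_mem_of_mem hloop hl.nodup ht ((hl.mem_iff_mem e he).1 ht) u m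
    · exact edgeFoldDelta_eq_zero ht (mt (hl.mem_iff_mem e he).2 ht) u m

end IsCutSide

variable [Fintype E]

lemma twist_mu (w : AdmMD V E n) (x : V) (e : E) :
    (twist tail head n w x).mu e = w.mu e + sigma tail head e x := rfl

lemma twist_wV (w : AdmMD V E n) (x u : V) :
    (twist tail head n w x).wV u
      = w.wV u + ∑ e, edgeTwistDelta tail head n e x u (w.mu e) := by
  simp only [twist, edgeTwistDelta, Finset.sum_sub_distrib, Finset.natCast_card_filter]
  split_ifs with hu
  · simp only [hu, true_and]
    ring
  · simp [hu]

lemma foldl_twist_mu (e : E) (l : List V) (w : AdmMD V E n) :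
    (l.foldl (twist tail head n) w).mu e = w.mu e + ((l.map (sigma tail head e)).sum : ℤ) := by
  induction l generalizing w with
  | nil => simp
  | cons x l ih =>
    simp only [List.foldl_cons, ih, twist_mu, List.map_cons, List.sum_cons, Int.cast_add, add_assoc]

lemma foldl_twist_wV (l : List V) (w : AdmMD V E n) (u : V) :
    (l.foldl (twist tail head n) w).wV u
      = w.wV u + ∑ e, edgeFoldDelta tail head n e u (w.mu e) l := by
  induction l generalizing w with
  | nil => simp [edgeFoldDelta]
  | cons x l ih =>
    simp only [List.foldl_cons, ih, twist_wV, twist_mu, edgeFoldDelta, Finset.sum_add_distrib]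
    ring

namespace IsCutSide

variable {v v' : V} {l : List V}

lemma foldl_twist_wV_eq (hloop : Loopless tail head) (hl : IsCutSide tail head v v' l)
    (w : AdmMD V E n) (u : V) : (l.foldl (twist tail head n) w).wV u = w.wV u
      + ∑ e, if Joins tail head v v' e then edgeTwistDelta tail head n e v u (w.mu e) else 0 := by
  simp only [foldl_twist_wV, hl.edgeFoldDelta_eq hloop]

lemma foldl_twist_wV_left (hloop : Loopless tail head) (hl : IsCutSide tail head v v' l)
    (w : AdmMD V E n) : (l.foldl (twist tail head n) w).wV v = w.wV v
      - ((Finset.univ.filter fun e => Joins tail head v v' e ∧ w.mu e = 0).card : ℤ) := by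
  rw [hl.foldl_twist_wV_eq hloop, Finset.natCast_card_filter, sub_eq_add_neg,
    ← Finset.sum_neg_distrib]
  refine congrArg _ (Finset.sum_congr rfl fun e _ => ?_)
  by_cases he : Joins tail head v v' e
  · simp [he, edgeTwistDelta_self hloop he.endpoint]
  · simp [he]

lemma foldl_twist_wV_right (hloop : Loopless tail head) (hl : IsCutSide tail head v v' l)
    (w : AdmMD V E n) : (l.foldl (twist tail head n) w).wV v' = w.wV v'
      + ((Finset.univ.filter fun e => Joins tail head v v' e ∧
          w.mu e + sigma tail head e v = 0).card : ℤ) := by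
  rw [hl.foldl_twist_wV_eq hloop, Finset.natCast_card_filter]
  refine congrArg _ (Finset.sum_congr rfl fun e _ => ?_)
  by_cases he : Joins tail head v v' e
  · have h := edgeTwistDelta_otherEnd hloop he.endpoint (w.mu e)
    rw [he.otherEnd_eq hloop] at h
    simp [he, h]
  · simp [he]

lemma foldl_twist_wV_of_ne (hloop : Loopless tail head) (hl : IsCutSide tail head v v' l)
    (w : AdmMD V E n) {u : V} (hu : u ≠ v) (hu' : u ≠ v') :
    (l.foldl (twist tail head n) w).wV u = w.wV u := by
  rw [hl.foldl_twist_wV_eq hloop, add_eq_left]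
  refine Finset.sum_eq_zero fun e _ => ?_
  split_ifs with he
  exacts [edgeTwistDelta_of_ne hu (he.otherEnd_eq hloop ▸ hu') _, rfl]

lemma foldl_twist_mu_of_joins (hloop : Loopless tail head) (hl : IsCutSide tail head v v' l)
    (w : AdmMD V E n) {e : E} (he : Joins tail head v v' e) :
    (l.foldl (twist tail head n) w).mu e = w.mu e + sigma tail head e v := by
  have hvv' : v ≠ v' := fun h => hl.not_mem_right (h ▸ hl.mem_left)
  rw [foldl_twist_mu, sum_map_sigma hloop e hl.nodup]
  rcases he with ⟨rfl, rfl⟩ | ⟨rfl, rfl⟩ <;>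
    simp [sigma, hl.mem_left, hl.not_mem_right, hvv'.symm]

lemma foldl_twist_mu_of_not_joins (hloop : Loopless tail head) (hl : IsCutSide tail head v v' l)
    (w : AdmMD V E n) {e : E} (he : ¬Joins tail head v v' e) :
    (l.foldl (twist tail head n) w).mu e = w.mu e := by
  rw [foldl_twist_mu, sum_map_sigma hloop e hl.nodup]
  simp [hl.mem_iff_mem e he]

end IsCutSide

end Twist

lemma barGraph_adj_tail_head {tail head : E → V} (hloop : Loopless tail head) (e : E) :
    (barGraph tail head).Adj (tail e) (head e) :=
  ⟨hloop e, e, .inl ⟨rfl, rfl⟩⟩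

lemma isCutSide_of_isAcyclic [DecidableEq V] {tail head : E → V} (hloop : Loopless tail head)
    (hG : (barGraph tail head).IsAcyclic) {v v' : V} (hadj : (barGraph tail head).Adj v v')
    {l : List V} (hnd : l.Nodup)
    (hmem : ∀ u : V, u ∈ l ↔ Relation.ReflTransGen
      (fun a b => (barGraph tail head).Adj a b ∧
        ¬((a = v ∧ b = v') ∨ (a = v' ∧ b = v))) v u) :
    IsCutSide tail head v v' l where
  nodup := hnd
  mem_left := (hmem v).2 .refl
  not_mem_right h := hG.not_reflTransGen_of_adj hadj ((hmem v').1 h)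
  mem_iff_mem e he :=
    ⟨fun h => (hmem _).2 (((hmem _).1 h).tail ⟨barGraph_adj_tail_head hloop e, he⟩),
      fun h => (hmem _).2 (((hmem _).1 h).tail ⟨(barGraph_adj_tail_head hloop e).symm,
        fun h' => he (by tauto)⟩)⟩

theorem statement_13_general {V E : Type*} [Fintype E] [DecidableEq V]
    (tail head : E → V) (n : E → ℕ)
    (hloop : Loopless tail head)
    (htree : (barGraph tail head).IsTree)
    (v v' : V) (hadj : (barGraph tail head).Adj v v')
    (w : AdmMD V E n)
    (l : List V) (hnd : l.Nodup)
    (hmem : ∀ u : V, u ∈ l ↔ Relation.ReflTransGen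
      (fun a b => (barGraph tail head).Adj a b ∧
        ¬((a = v ∧ b = v') ∨ (a = v' ∧ b = v))) v u) :
    (∀ et : E, ((tail et = v ∧ head et = v') ∨ (tail et = v' ∧ head et = v)) →
        (l.foldl (twist tail head n) w).mu et
          = w.mu et + (sigma tail head et v : ZMod (n et))) ∧
    (∀ et : E, ¬((tail et = v ∧ head et = v') ∨ (tail et = v' ∧ head et = v)) →
        (l.foldl (twist tail head n) w).mu et = w.mu et) ∧
    ((l.foldl (twist tail head n) w).wV v = w.wV v -
        ((Finset.univ.filter fun et : E =>
          ((tail et = v ∧ head et = v') ∨ (tail et = v' ∧ head et = v)) ∧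
            w.mu et = 0).card : ℤ)) ∧
    ((l.foldl (twist tail head n) w).wV v' = w.wV v' +
        ((Finset.univ.filter fun et : E =>
          ((tail et = v ∧ head et = v') ∨ (tail et = v' ∧ head et = v)) ∧
            w.mu et + (sigma tail head et v : ZMod (n et)) = 0).card : ℤ)) ∧
    (∀ u : V, u ≠ v → u ≠ v' → (l.foldl (twist tail head n) w).wV u = w.wV u) := by
  have hl := isCutSide_of_isAcyclic hloop htree.isAcyclic hadj hnd hmem
  exact ⟨fun _ => hl.foldl_twist_mu_of_joins hloop w,
    fun _ => hl.foldl_twist_mu_of_not_joins hloop w,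
    hl.foldl_twist_wV_left hloop w, hl.foldl_twist_wV_right hloop w,
    fun _ => hl.foldl_twist_wV_of_ne hloop w⟩

/-- on a multitree, the twist at `(e,v)` — the composite of twists at all
vertices in the connected component of `v` in `Γ̄∖{e}` — changes only `μ(ẽ)` for edges
`ẽ` joining `v` and `v'`, and `w_Γ(v)`, `w_Γ(v')`, by the stated amounts. -/
theorem statement_13 {V E : Type*} [Fintype V] [Fintype E] [DecidableEq V] [DecidableEq E]
    (tail head : E → V) (n : E → ℕ)
    (hloop : Loopless tail head)
    (htree : (barGraph tail head).IsTree)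
    (hn : ∀ e, 0 < n e)
    (v v' : V) (hadj : (barGraph tail head).Adj v v')
    (w : AdmMD V E n)
    (l : List V) (hnd : l.Nodup)
    (hmem : ∀ u : V, u ∈ l ↔ Relation.ReflTransGen
      (fun a b => (barGraph tail head).Adj a b ∧
        ¬((a = v ∧ b = v') ∨ (a = v' ∧ b = v))) v u) :
    (∀ et : E, ((tail et = v ∧ head et = v') ∨ (tail et = v' ∧ head et = v)) →
        (l.foldl (twist tail head n) w).mu et
          = w.mu et + (sigma tail head et v : ZMod (n et))) ∧
    (∀ et : E, ¬((tail et = v ∧ head et = v') ∨ (tail et = v' ∧ head et = v)) →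
        (l.foldl (twist tail head n) w).mu et = w.mu et) ∧
    ((l.foldl (twist tail head n) w).wV v = w.wV v -
        ((Finset.univ.filter fun et : E =>
          ((tail et = v ∧ head et = v') ∨ (tail et = v' ∧ head et = v)) ∧
            w.mu et = 0).card : ℤ)) ∧
    ((l.foldl (twist tail head n) w).wV v' = w.wV v' +
        ((Finset.univ.filter fun et : E =>
          ((tail et = v ∧ head et = v') ∨ (tail et = v' ∧ head et = v)) ∧
            w.mu et + (sigma tail head et v : ZMod (n et)) = 0).card : ℤ)) ∧
    (∀ u : V, u ≠ v → u ≠ v' → (l.foldl (twist tail head n) w).wV u = w.wV u) :=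
  statement_13_general tail head n hloop htree v v' hadj w l hnd hmem

end LLS
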